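/- arXiv:2603.28341 — 7 statements merged into one kernel-verified Lean document; each statement's English description precedes it below -/
import Mathlib

section
/- Let D be a noncommutative division ring with center F, and let M be an abelian maximal subgroup of the multiplicative group D^*. Then K = M ∪ {0} is a subfield of D; in particular M is closed under addition of nonzero sums, i.e., for all a, b ∈ M with a + b ≠ 0, we have a + b ∈ M. -/
/-- If `D` is a noncommutative division ring and `M` is an abelian maximal
subgroup of `Dˣ`, then `K = M ∪ {0}` is a (commutative) subfield of `D`; in particular
`M` is closed under nonzero sums. -/
theorem stmt_0 {D : Type*} [DivisionRing D]
    (hD : ∃ a b : D, a * b ≠ b * a)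
    (M : Subgroup Dˣ) (hmax : IsCoatom M)
    (habel : ∀ a ∈ M, ∀ b ∈ M, a * b = b * a) :
    (∃ K : Subfield D, (∀ a ∈ K, ∀ b ∈ K, a * b = b * a) ∧
      (K : Set D) = {d : D | d = 0 ∨ ∃ u ∈ M, (u : D) = d}) ∧
    (∀ a ∈ M, ∀ b ∈ M, (a : D) + (b : D) ≠ 0 →
      ∃ c ∈ M, (c : D) = (a : D) + (b : D)) := by
  classical
  set s : Set D := (Units.val : Dˣ → D) '' (M : Set Dˣ) with hs
  -- the centralizer of M, as a subfield (sub-division-ring)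
  have hinv : ∀ x ∈ Subring.centralizer s, x⁻¹ ∈ Subring.centralizer s := by
    intro x hx
    rw [Subring.mem_centralizer_iff] at hx ⊢
    intro g hg
    rcases eq_or_ne x 0 with rfl | hx0
    · simp
    · have h := hx g hg
      calc g * x⁻¹ = x⁻¹ * x * (g * x⁻¹) := by rw [inv_mul_cancel₀ hx0, one_mul]
        _ = x⁻¹ * (x * g) * x⁻¹ := by simp [mul_assoc]
        _ = x⁻¹ * (g * x) * x⁻¹ := by rw [h]
        _ = x⁻¹ * g * (x * x⁻¹) := by simp [mul_assoc]
        _ = x⁻¹ * g := by rw [mul_inv_cancel₀ hx0, mul_one]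
  set K : Subfield D :=
    { Subring.centralizer s with inv_mem' := hinv } with hKdef
  have memK : ∀ x : D, x ∈ K ↔ ∀ m ∈ M, (m : D) * x = x * (m : D) := by
    intro x
    constructor
    · intro hx m hm
      exact (Subring.mem_centralizer_iff.mp hx) (m : D) ⟨m, hm, rfl⟩
    · intro h
      refine Subring.mem_centralizer_iff.mpr ?_
      rintro g ⟨m, hm, rfl⟩
      exact h m hm
  -- the subgroup of units lying in K
  set G : Subgroup Dˣ :=
    { carrier := {u : Dˣ | (u : D) ∈ K}
      one_mem' := one_mem K
      mul_mem' := fun ha hb => by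
        simpa [Units.val_mul] using mul_mem ha hb
      inv_mem' := fun {u} hu => by
        have : ((u⁻¹ : Dˣ) : D) = (u : D)⁻¹ := by
          rw [← Units.val_inv_eq_inv_val]
        simpa [this] using inv_mem (s := K) hu } with hGdef
  have hMG : M ≤ G := by
    intro m hm
    show (m : D) ∈ K
    rw [memK]
    intro n hn
    have := habel n hn m hm
    calc (n : D) * (m : D) = ((n * m : Dˣ) : D) := rfl
      _ = ((m * n : Dˣ) : D) := by rw [this]
      _ = (m : D) * (n : D) := rfl
  -- rule out the case G = ⊤ (i.e. M central)
  have hGM : G = M := by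
    rcases hMG.lt_or_eq with hlt | heq
    · exfalso
      have hGtop : G = ⊤ := hmax.2 G hlt
      -- M is central
      have hMcent : M ≤ Subgroup.center Dˣ := by
        intro m hm
        rw [Subgroup.mem_center_iff]
        intro u
        have hu : (u : D) ∈ K := by
          have : u ∈ G := hGtop ▸ Subgroup.mem_top u
          exact this
        have := (memK (u : D)).mp hu m hm
        ext
        simp only [Units.val_mul]
        exact this.symm
      have hcent_ne : Subgroup.center Dˣ ≠ ⊤ := by
        intro htop
        obtain ⟨a, b, hab⟩ := hD
        have ha0 : a ≠ 0 := by rintro rfl; simp at hab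
        have hb0 : b ≠ 0 := by rintro rfl; simp at hab
        have := Subgroup.mem_center_iff.mp
          (htop ▸ Subgroup.mem_top (Units.mk0 a ha0)) (Units.mk0 b hb0)
        apply hab
        have := congrArg Units.val this
        simpa using this.symm
      have hMeq : M = Subgroup.center Dˣ := by
        rcases hMcent.lt_or_eq with h | h
        · exact absurd (hmax.2 _ h) hcent_ne
        · exact h
      haveI hnormal : M.Normal := by rw [hMeq]; infer_instance
      -- quotient by center is cyclic
      have hne : ∃ u : Dˣ, u ∉ M := by
        by_contra h
        push_neg at h
        exact hmax.1 ((Subgroup.eq_top_iff' M).mpr h)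
      obtain ⟨u, hu⟩ := hne
      set π : Dˣ →* Dˣ ⧸ M := QuotientGroup.mk' M with hπ
      have hcyc : IsCyclic (Dˣ ⧸ M) := by
        refine ⟨⟨π u, ?_⟩⟩
        intro q
        have hlt2 : M < Subgroup.comap π (Subgroup.zpowers (π u)) := by
          constructor
          · intro m hm
            have : π m = 1 := (QuotientGroup.eq_one_iff m).mpr hm
            show m ∈ Subgroup.comap π (Subgroup.zpowers (π u))
            rw [Subgroup.mem_comap, this]
            exact one_mem _
          · intro hle
            have : u ∈ M := by
              have := hle (Subgroup.mem_comap.mpr (Subgroup.mem_zpowers (π u)))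
              exact this
            exact hu this
        have htop : Subgroup.comap π (Subgroup.zpowers (π u)) = ⊤ := hmax.2 _ hlt2
        have hsurj : Function.Surjective π := QuotientGroup.mk'_surjective M
        have hz : Subgroup.zpowers (π u) = ⊤ := by
          apply Subgroup.comap_injective hsurj
          rw [htop, Subgroup.comap_top]
        exact (Subgroup.eq_top_iff' _).mp hz q
      have hcomm : ∀ a b : Dˣ, a * b = b * a := by
        intro a b
        exact commutative_of_cyclic_center_quotient π (by rw [hπ, QuotientGroup.ker_mk']; exact hMcent) a b
      obtain ⟨a, b, hab⟩ := hD
      have ha0 : a ≠ 0 := by rintro rfl; simp at hab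
      have hb0 : b ≠ 0 := by rintro rfl; simp at hab
      have := hcomm (Units.mk0 a ha0) (Units.mk0 b hb0)
      apply hab
      have := congrArg Units.val this
      simpa using this
    · exact heq.symm
  -- description of K
  have hKset : (K : Set D) = {d : D | d = 0 ∨ ∃ u ∈ M, (u : D) = d} := by
    ext d
    simp only [Set.mem_setOf_eq, SetLike.mem_coe]
    constructor
    · intro hd
      rcases eq_or_ne d 0 with rfl | hd0
      · exact Or.inl rfl
      · right
        refine ⟨Units.mk0 d hd0, ?_, rfl⟩
        have : Units.mk0 d hd0 ∈ G := hd
        rwa [hGM] at this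
    · rintro (rfl | ⟨u, hu, rfl⟩)
      · exact zero_mem K
      · exact hMG hu
  refine ⟨⟨K, ?_, hKset⟩, ?_⟩
  · intro a ha b hb
    rcases eq_or_ne a 0 with rfl | ha0
    · simp
    rcases eq_or_ne b 0 with rfl | hb0
    · simp
    have hbM : Units.mk0 b hb0 ∈ M := by
      rw [← hGM]
      show ((Units.mk0 b hb0 : Dˣ) : D) ∈ K
      simpa using hb
    have := (memK a).mp ha (Units.mk0 b hb0) hbM
    simpa using this.symm
  · intro a ha b hb hab
    have hsum : (a : D) + (b : D) ∈ K := add_mem (hMG ha) (hMG hb)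
    have h2 : ((a : D) + (b : D)) ∈ {d : D | d = 0 ∨ ∃ u ∈ M, (u : D) = d} := by
      rw [← hKset]; exact hsum
    rcases h2 with h | ⟨u, hu, hud⟩
    · exact absurd h hab
    · exact ⟨u, hu, hud⟩
end

section
/- Let D be a noncommutative division ring and M an abelian maximal subgroup of D^*. Then the centralizer in D of the set M, i.e., {x ∈ D | ∀ m ∈ M, x*m = m*x}, together with 0, forms a commutative subring of D whose nonzero elements form exactly the group M. In particular, M ∪ {0} is a maximal subfield of D: it is a commutative sub-division-ring, and any subfield L of D with M ∪ {0} ⊆ L satisfies L = M ∪ {0} or L = D. -/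
/-!
An abelian maximal subgroup `M` of a nonabelian group is self-centralizing: otherwise `M` would
be central, and then the centralizer of any `g ∉ M` would contain `M` and `g`, hence be everything;
so every element would be central. In `Dˣ` this says that the centralizer of `M` in `D` is `M ∪ {0}`, which
is therefore a commutative sub-division-ring; a commutative subfield containing it centralizes `M`
and so lies inside it.
-/

theorem Subgroup.centralizer_eq_self_of_isCoatom {G : Type*} [Group G] {M : Subgroup G}
    (hmax : IsCoatom M) (hcomm : M ≤ centralizer (M : Set G)) (hG : ∃ a b : G, a * b ≠ b * a) :
    centralizer (M : Set G) = M := by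
  refine (hmax.le_iff.mp hcomm).resolve_left fun htop => ?_
  obtain ⟨a, b, hab⟩ := hG
  have hMb : M ≤ centralizer {b} := fun g hg =>
    mem_centralizer_singleton_iff.mpr (mem_centralizer_iff.mp (htop ▸ mem_top b) g hg)
  rcases hmax.le_iff.mp hMb with hb | hb
  · exact hab (mem_centralizer_singleton_iff.mp (hb ▸ mem_top a))
  · have hbM : b ∈ M := hb ▸ mem_centralizer_singleton_iff.mpr rfl
    exact hab (mem_centralizer_iff.mp (htop ▸ mem_top a) b hbM).symm

theorem Units.exists_mul_ne_mul {G₀ : Type*} [GroupWithZero G₀] (h : ∃ a b : G₀, a * b ≠ b * a) :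
    ∃ a b : G₀ˣ, a * b ≠ b * a := by
  obtain ⟨a, b, hab⟩ := h
  have ha : a ≠ 0 := by rintro rfl; simp at hab
  have hb : b ≠ 0 := by rintro rfl; simp at hab
  exact ⟨Units.mk0 a ha, Units.mk0 b hb, fun h => hab (by simpa using congrArg Units.val h)⟩

theorem Units.val_image_centralizer {G₀ : Type*} [GroupWithZero G₀] (s : Set G₀ˣ) :
    Units.val '' (Subgroup.centralizer s : Set G₀ˣ) = (Units.val '' s).centralizer \ {0} := by
  ext d
  constructor
  · rintro ⟨u, hu, rfl⟩
    refine ⟨?_, u.ne_zero⟩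
    rintro _ ⟨v, hv, rfl⟩
    exact congrArg Units.val (Subgroup.mem_centralizer_iff.mp hu v hv)
  · rintro ⟨hd, hd0⟩
    refine ⟨Units.mk0 d hd0, Subgroup.mem_centralizer_iff.mpr fun v hv => ?_, rfl⟩
    exact Units.ext (Set.mem_centralizer_iff.mp hd _ ⟨v, hv, rfl⟩)

theorem Units.centralizer_val_image_of_centralizer_eq {G₀ : Type*} [GroupWithZero G₀]
    {M : Subgroup G₀ˣ} (hM : Subgroup.centralizer (M : Set G₀ˣ) = M) :
    (Units.val '' (M : Set G₀ˣ)).centralizer = Units.val '' (M : Set G₀ˣ) ∪ {0} := by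
  have h0 : {0} ⊆ (Units.val '' (M : Set G₀ˣ)).centralizer :=
    Set.singleton_subset_iff.mpr Set.zero_mem_centralizer
  rw [← Set.sdiff_union_of_subset h0, ← Units.val_image_centralizer, hM]

def Subfield.centralizer {D : Type*} [DivisionRing D] (s : Set D) : Subfield D :=
  { Subring.centralizer s with inv_mem' := fun _ => Set.inv_mem_centralizer₀ }

/-- For an abelian maximal subgroup `M` of `Dˣ` (`D` a noncommutative
division ring), the centralizer of `M` in `D` is commutative, its nonzero elements are
exactly `M`, and `M ∪ {0}` is a maximal subfield of `D`. -/
theorem stmt_1 {D : Type*} [DivisionRing D]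
    (hD : ∃ a b : D, a * b ≠ b * a)
    (M : Subgroup Dˣ) (hmax : IsCoatom M)
    (habel : ∀ a ∈ M, ∀ b ∈ M, a * b = b * a) :
    (∀ a ∈ Subring.centralizer {d : D | ∃ u ∈ M, (u : D) = d},
      ∀ b ∈ Subring.centralizer {d : D | ∃ u ∈ M, (u : D) = d}, a * b = b * a) ∧
    (∀ d : D, (d ∈ Subring.centralizer {d : D | ∃ u ∈ M, (u : D) = d} ∧ d ≠ 0) ↔
      ∃ u ∈ M, (u : D) = d) ∧
    (∃ K : Subfield D, (∀ a ∈ K, ∀ b ∈ K, a * b = b * a) ∧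
      (K : Set D) = {d : D | ∃ u ∈ M, (u : D) = d} ∪ {0} ∧
      ∀ L : Subfield D, (∀ a ∈ L, ∀ b ∈ L, a * b = b * a) → (K : Set D) ⊆ L →
        (L : Set D) = (K : Set D) ∨ (L : Set D) = Set.univ) := by
  set S : Set D := {d : D | ∃ u ∈ M, (u : D) = d}
  have hMc : Subgroup.centralizer (M : Set Dˣ) = M :=
    Subgroup.centralizer_eq_self_of_isCoatom hmax
      (fun a ha => Subgroup.mem_centralizer_iff.mpr fun b hb => habel b hb a ha)
      (Units.exists_mul_ne_mul hD)
  have hC : S.centralizer = S ∪ {0} := Units.centralizer_val_image_of_centralizer_eq hMc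
  have hcomm : ∀ a ∈ S.centralizer, ∀ b ∈ S.centralizer, a * b = b * a := by
    intro a ha b hb
    rcases (hC ▸ ha : a ∈ S ∪ {0}) with ha | rfl
    · exact Set.mem_centralizer_iff.mp hb a ha
    · simp
  refine ⟨hcomm, fun d => ?_, Subfield.centralizer S, hcomm, hC, fun L hL hKL => Or.inl ?_⟩
  · rw [← SetLike.mem_coe, Subring.coe_centralizer, hC, Set.mem_union, Set.mem_singleton_iff]
    refine ⟨fun ⟨h, hd⟩ => h.resolve_right hd, fun h => ⟨Or.inl h, ?_⟩⟩
    obtain ⟨u, -, rfl⟩ := h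
    exact u.ne_zero
  · have hSL : S ⊆ L := fun g hg => hKL (show g ∈ S.centralizer from hC ▸ Or.inl hg)
    exact Set.Subset.antisymm
      (fun x hx => Set.mem_centralizer_iff.mpr fun g hg => hL g (hSL hg) x hx) hKL
end

section
/- Let D be a noncommutative division ring with center F, and let A be an abelian maximal subgroup of D^*. Then for every x ∈ D^* \ A, we have A ∩ x⁻¹Ax = F^* (the nonzero central elements). Equivalently, the image of A in D^*/F^* is a malnormal subgroup. -/
/-!
Let `A` be an abelian maximal subgroup of `Dˣ`. The centralizer of a noncentral `u ∈ A` is a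
proper subgroup containing `A`, hence equals `A`. So if both `u` and `x u x⁻¹` lie in `A` with `u`
noncentral, conjugation by `x` maps `A = C(u)` onto `C(x u x⁻¹) = A`; for `x ∉ A` maximality
forces `A` to be normal in `Dˣ`. Then `u` commutes with all of its conjugates, and a classical
argument of Herstein (comparing the conjugates by `y` and by `y + 1`) shows that such an element
of a division ring is central. Conversely, a central element outside `A` would centralize `A` and
make the maximal subgroup `A` central, so the center of `Dˣ` would be everything.
-/

namespace Subgroup

variable {G : Type*} [Group G] {A : Subgroup G}

theorem center_le_of_isCoatom (hmax : IsCoatom A)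
    (habel : ∀ a ∈ A, ∀ b ∈ A, a * b = b * a) (hG : center G ≠ ⊤) : center G ≤ A := by
  intro z hz
  by_contra hzA
  have hA_le : A ≤ centralizer (A : Set G) := fun a ha =>
    mem_centralizer_iff.mpr fun b hb => habel b hb a ha
  have hz_mem : z ∈ centralizer (A : Set G) :=
    mem_centralizer_iff.mpr fun a _ => mem_center_iff.mp hz a
  have hA_central : A ≤ center G := by
    rw [← SetLike.coe_subset_coe, ← centralizer_eq_top_iff_subset]
    exact (SetLike.isCoatom_iff.mp hmax).2 _ z hA_le hzA hz_mem
  exact hG ((SetLike.isCoatom_iff.mp hmax).2 _ z hA_central hzA hz)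

theorem centralizer_singleton_eq_of_isCoatom (hmax : IsCoatom A)
    (habel : ∀ a ∈ A, ∀ b ∈ A, a * b = b * a) {w : G} (hw : w ∈ A) (hwc : w ∉ center G) :
    centralizer {w} = A :=
  (hmax.ne_top_iff_eq fun a ha => mem_centralizer_singleton_iff.mpr (habel a ha w hw)).mp
    (by rwa [Ne, centralizer_eq_top_iff_subset, Set.singleton_subset_iff])

theorem normal_of_isCoatom_of_conj_mem (hmax : IsCoatom A)
    (habel : ∀ a ∈ A, ∀ b ∈ A, a * b = b * a) {x u : G} (hx : x ∉ A) (hu : u ∈ A)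
    (hxu : x * u * x⁻¹ ∈ A) (huc : u ∉ center G) : A.Normal := by
  have hxuc : x * u * x⁻¹ ∉ center G := fun h => huc (by
    simpa [mul_assoc] using (center G).normal_of_characteristic.conj_mem _ h x⁻¹)
  have hCu := centralizer_singleton_eq_of_isCoatom hmax habel hu huc
  have hCxu := centralizer_singleton_eq_of_isCoatom hmax habel hxu hxuc
  have hxN : x ∈ normalizer (A : Set G) := mem_normalizer_iff.mpr fun h =>
    calc h ∈ A ↔ h ∈ centralizer {u} := by rw [hCu]
      _ ↔ x * h * x⁻¹ ∈ centralizer {x * u * x⁻¹} := by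
        simp only [mem_centralizer_singleton_iff]
        exact (Commute.conj_iff x).symm
      _ ↔ x * h * x⁻¹ ∈ A := by rw [hCxu]
  rw [← normalizer_eq_top_iff]
  exact (hmax.ne_iff_eq_top le_normalizer).mp fun h => hx (h ▸ hxN)

end Subgroup

section DivisionRing

variable {D : Type*} [DivisionRing D]

theorem Units.mem_center_iff_val_mem_center {u : Dˣ} :
    u ∈ Subgroup.center Dˣ ↔ (u : D) ∈ Subring.center D := by
  change u ∈ Set.center Dˣ ↔ (u : D) ∈ Set.center D
  rw [Set.center_units_eq, Set.mem_preimage]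

theorem center_units_ne_top (hD : ∃ a b : D, a * b ≠ b * a) : Subgroup.center Dˣ ≠ ⊤ := by
  intro h
  obtain ⟨a, b, hab⟩ := hD
  have ha : a ≠ 0 := by rintro rfl; simp at hab
  have hcen := Units.mem_center_iff_val_mem_center.mp (h ▸ Subgroup.mem_top (Units.mk0 a ha))
  exact hab (Subring.mem_center_iff.mp hcen b).symm

theorem mem_center_of_forall_commute_conj {a : D}
    (h : ∀ y : D, y ≠ 0 → Commute a (y⁻¹ * a * y)) : a ∈ Subring.center D := by
  refine Subring.mem_center_iff.mpr fun y => ?_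
  suffices Commute a y from this.eq.symm
  rcases eq_or_ne y 0 with rfl | hy
  · exact Commute.zero_right a
  rcases eq_or_ne (y + 1) 0 with hy1 | hy1
  · rw [eq_neg_of_add_eq_zero_left hy1]
    exact (Commute.one_right a).neg_right
  set c := y⁻¹ * a * y
  set d := (y + 1)⁻¹ * a * (y + 1)
  have hc : y * c = a * y := by simp only [c, ← mul_assoc, mul_inv_cancel₀ hy, one_mul]
  have hd : y * d + d = a * y + a := by
    have : (y + 1) * d = a * (y + 1) := by
      simp only [d, ← mul_assoc, mul_inv_cancel₀ hy1, one_mul]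
    rwa [add_mul, one_mul, mul_add, mul_one] at this
  have hy_dc : y * (d - c) = a - d := by
    rw [mul_sub, hc, sub_eq_sub_iff_add_eq_add, hd, add_comm]
  rcases eq_or_ne (d - c) 0 with hdc | hdc
  · have had : a = d := by rwa [hdc, mul_zero, eq_comm, sub_eq_zero] at hy_dc
    have hcd : c = d := (sub_eq_zero.mp hdc).symm
    show a * y = y * a
    rw [← hc, hcd, ← had]
  · -- `a` commutes with `d - c` and with `y * (d - c) = a - d`, and `d - c` is invertible.
    have hac : Commute a (d - c) := (h _ hy1).sub_right (h y hy)
    have hayc : Commute a (y * (d - c)) := hy_dc ▸ (Commute.refl a).sub_right (h _ hy1)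
    refine mul_right_cancel₀ hdc ?_
    rw [mul_assoc, hayc.eq, mul_assoc, ← hac.eq, mul_assoc]

theorem val_mem_center_of_mem_normal (A : Subgroup Dˣ) [A.Normal]
    (habel : ∀ a ∈ A, ∀ b ∈ A, a * b = b * a) {u : Dˣ} (hu : u ∈ A) :
    (u : D) ∈ Subring.center D := by
  refine mem_center_of_forall_commute_conj fun y hy => ?_
  have hconj : (Units.mk0 y hy)⁻¹ * u * Units.mk0 y hy ∈ A := by
    simpa using ‹A.Normal›.conj_mem u hu (Units.mk0 y hy)⁻¹
  simpa [commute_iff_eq] using congrArg Units.val (habel u hu _ hconj)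

end DivisionRing

/-- If `A` is an abelian maximal subgroup of `Dˣ` (`D` a noncommutative
division ring with center `F`), then for every `x ∈ Dˣ \ A` we have
`A ∩ x⁻¹Ax = F^*`; i.e. the image of `A` in `Dˣ/F^*` is malnormal. -/
theorem stmt_3 {D : Type*} [DivisionRing D]
    (hD : ∃ a b : D, a * b ≠ b * a)
    (A : Subgroup Dˣ) (hmax : IsCoatom A)
    (habel : ∀ a ∈ A, ∀ b ∈ A, a * b = b * a) :
    ∀ x : Dˣ, x ∉ A → ∀ u : Dˣ,
      (u ∈ A ∧ x * u * x⁻¹ ∈ A) ↔ (u : D) ∈ Subring.center D := by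
  intro x hx u
  constructor
  · rintro ⟨huA, hxuA⟩
    by_contra hu
    have : A.Normal := A.normal_of_isCoatom_of_conj_mem hmax habel hx huA hxuA
      (mt Units.mem_center_iff_val_mem_center.mp hu)
    exact hu (val_mem_center_of_mem_normal A habel huA)
  · intro hu
    have hu' : u ∈ Subgroup.center Dˣ := Units.mem_center_iff_val_mem_center.mpr hu
    have huA : u ∈ A := Subgroup.center_le_of_isCoatom hmax habel (center_units_ne_top hD) hu'
    rw [Subgroup.mem_center_iff.mp hu' x, mul_inv_cancel_right]
    exact ⟨huA, huA⟩
end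

section
/- Let G be a group and A an abelian maximal subgroup of G with Z(G) ≤ A. If A is not normal in G, then for every x ∈ G \ N_G(A), the intersection A ∩ x⁻¹Ax is contained in the center Z(G). (Key step: A ∪ x⁻¹Ax is contained in the centralizer of A ∩ x⁻¹Ax, which by maximality of A must be all of G.) -/
/-!
Put `B = x⁻¹Ax`. It is again an abelian maximal subgroup, and `B ≠ A` because `x ∉ N_G(A)`.
Both `A` and `B` centralize `A ∩ B`, hence so does `A ⊔ B`, which is all of `G` since two
distinct maximal subgroups generate `G`.
-/

open Pointwise

namespace Subgroup

variable {G : Type*} [Group G]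

theorem inf_le_center_of_isCoatom_of_ne {A B : Subgroup G} (hA : IsCoatom A) (hB : IsCoatom B)
    (hAB : A ≠ B) (hAcomm : ∀ a ∈ A, ∀ b ∈ A, a * b = b * a)
    (hBcomm : ∀ a ∈ B, ∀ b ∈ B, a * b = b * a) : A ⊓ B ≤ center G := by
  have hcentralizes : A ⊔ B ≤ centralizer (A ⊓ B : Set G) :=
    sup_le (fun a ha => mem_centralizer_iff.2 fun u hu => hAcomm u hu.1 a ha)
      (fun b hb => mem_centralizer_iff.2 fun u hu => hBcomm u hu.2 b hb)
  rwa [hA.sup_eq_top_of_ne hB hAB, top_le_iff, centralizer_eq_top_iff_subset] at hcentralizes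

variable {α : Type*} [Group α] [MulDistribMulAction α G]

theorem isCoatom_pointwise_smul {H : Subgroup G} (hH : IsCoatom H) (a : α) :
    IsCoatom (a • H) :=
  (OrderIso.isCoatom_iff ⟨MulAction.toPerm a, pointwise_smul_le_pointwise_smul_iff⟩ H).2 hH

theorem pointwise_smul_mul_comm {H : Subgroup G} (hH : ∀ a ∈ H, ∀ b ∈ H, a * b = b * a)
    (a : α) : ∀ g ∈ a • H, ∀ h ∈ a • H, g * h = h * g := by
  intro _ hg' _ hh'
  obtain ⟨g, hg, rfl⟩ := (mem_smul_pointwise_iff_exists _ a H).1 hg'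
  obtain ⟨h, hh, rfl⟩ := (mem_smul_pointwise_iff_exists _ a H).1 hh'
  rw [← smul_mul', hH g hg h hh, smul_mul']

end Subgroup

theorem stmt_4_general {G : Type*} [Group G]
    (A : Subgroup G) (hmax : IsCoatom A)
    (habel : ∀ a ∈ A, ∀ b ∈ A, a * b = b * a) :
    ∀ x : G, x ∉ Subgroup.normalizer (A : Set G) →
      ∀ u : G, u ∈ A → x * u * x⁻¹ ∈ A → u ∈ Subgroup.center G := by
  intro x hx u hu hxu
  let B := ConjAct.toConjAct x⁻¹ • A
  have hAB : A ≠ B := fun h =>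
    hx (inv_mem_iff.1 (Subgroup.conjAct_pointwise_smul_iff.1 h.symm))
  have huB : u ∈ B := by
    rwa [Subgroup.mem_pointwise_smul_iff_inv_smul_mem, ← ConjAct.toConjAct_inv, inv_inv,
      ConjAct.toConjAct_smul]
  exact Subgroup.inf_le_center_of_isCoatom_of_ne hmax (Subgroup.isCoatom_pointwise_smul hmax _)
    hAB habel (Subgroup.pointwise_smul_mul_comm habel _) ⟨hu, huB⟩

/-- If `A` is an abelian maximal subgroup of a group `G` with `Z(G) ≤ A`
and `A` not normal, then for any `x ∉ N_G(A)` one has `A ∩ x⁻¹Ax ≤ Z(G)`. -/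
theorem stmt_4 {G : Type*} [Group G]
    (A : Subgroup G) (hmax : IsCoatom A)
    (habel : ∀ a ∈ A, ∀ b ∈ A, a * b = b * a)
    (hZ : Subgroup.center G ≤ A)
    (hnotnormal : ¬ A.Normal) :
    ∀ x : G, x ∉ Subgroup.normalizer (A : Set G) →
      ∀ u : G, u ∈ A → x * u * x⁻¹ ∈ A → u ∈ Subgroup.center G :=
  stmt_4_general A hmax habel
end

section
/- Let D be a noncommutative division ring and A an abelian subgroup of D^* that is normal in D^*. Then A is contained in the center of D. In particular, D^* has no abelian normal maximal subgroup. -/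
/-!
Hua's trick: for `a ∈ A` and `x ≠ 0, -1`, the conjugates `b = x⁻¹ a x` and
`c = (1 + x)⁻¹ a (1 + x)` lie in `A`, so commute with `a`. Comparing `x b = a x` with
`(1 + x) c = a (1 + x)` gives `x (b - c) = c - a`: either `b = c`, whence `c = a` and `x`
commutes with `a`, or `x = (c - a) (b - c)⁻¹` is built from elements commuting with `a`.

A central subgroup `A` is never maximal when the group is not abelian: for a noncentral `g`,
`A` is properly contained in the centralizer of `g`, which is a proper subgroup.
-/

theorem commute_of_commute_conj_of_commute_conj_one_add {D : Type*} [DivisionRing D] {a b c x : D}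
    (hb : x * b = a * x) (hc : (1 + x) * c = a * (1 + x))
    (hab : Commute a b) (hac : Commute a c) : Commute a x := by
  have key : x * (b - c) = c - a := by
    rw [mul_sub, sub_eq_sub_iff_add_eq_add, add_comm, hb, ← one_add_mul x c, hc, mul_one_add]
  by_cases hbc : b = c
  · rw [hbc, sub_self, mul_zero, eq_comm, sub_eq_zero] at key
    rw [key] at hc
    simpa using Commute.sub_right (Commute.symm hc) (Commute.one_right a)
  · rw [(eq_mul_inv_iff_mul_eq₀ (sub_ne_zero.mpr hbc)).mpr key]
    exact (hac.sub_right (Commute.refl a)).mul_right (hab.sub_right hac).inv_right₀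

theorem Subgroup.Normal.val_mem_center_of_commute {D : Type*} [DivisionRing D] {A : Subgroup Dˣ}
    (hnorm : A.Normal) (habel : ∀ a ∈ A, ∀ b ∈ A, a * b = b * a) {u : Dˣ} (hu : u ∈ A) :
    (u : D) ∈ Subring.center D := by
  have conj (g : Dˣ) : Commute (u : D) (g⁻¹ * u * g : Dˣ) :=
    congrArg Units.val (habel u hu _ (by simpa using hnorm.conj_mem u hu g⁻¹))
  have conj_val {x : D} (hx : x ≠ 0) :
      x * ((Units.mk0 x hx)⁻¹ * u * Units.mk0 x hx : Dˣ) = u * x := by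
    simp [← mul_assoc, mul_inv_cancel₀ hx]
  refine Subring.mem_center_iff.mpr fun x => Commute.symm ?_
  rcases eq_or_ne x 0 with rfl | hx
  · exact Commute.zero_right _
  rcases eq_or_ne (1 + x) 0 with h1 | h1
  · rw [eq_neg_of_add_eq_zero_right h1]
    exact Commute.neg_one_right _
  exact commute_of_commute_conj_of_commute_conj_one_add (conj_val hx) (conj_val h1)
    (conj _) (conj _)

theorem Subgroup.not_isCoatom_of_le_center {G : Type*} [Group G] {A : Subgroup G}
    (hA : A ≤ center G) (hG : center G ≠ ⊤) : ¬ IsCoatom A := by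
  obtain ⟨g, hg⟩ : ∃ g, g ∉ center G := by
    by_contra! h
    exact hG (eq_top_iff.mpr fun g _ => h g)
  intro hcoatom
  have hlt : A < centralizer {g} :=
    lt_of_le_of_ne (hA.trans (center_le_centralizer _))
      fun h => hg (hA (h ▸ mem_centralizer_singleton_iff.mpr rfl))
  exact hg (centralizer_eq_top_iff_subset.mp (hcoatom.2 _ hlt) rfl)

theorem Subgroup.center_units_ne_top {G₀ : Type*} [GroupWithZero G₀]
    (h : ∃ a b : G₀, a * b ≠ b * a) : center G₀ˣ ≠ ⊤ := by
  obtain ⟨a, b, hab⟩ := h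
  have ha : a ≠ 0 := by rintro rfl; simp at hab
  have hb : b ≠ 0 := by rintro rfl; simp at hab
  intro htop
  have := mem_center_iff.mp (htop ▸ mem_top (Units.mk0 a ha)) (Units.mk0 b hb)
  exact hab (congrArg Units.val this).symm

/-- In a noncommutative division ring `D`, an abelian normal subgroup of
`Dˣ` is central; in particular `Dˣ` has no abelian normal maximal subgroup. -/
theorem stmt_6 {D : Type*} [DivisionRing D]
    (hD : ∃ a b : D, a * b ≠ b * a)
    (A : Subgroup Dˣ) (hnorm : A.Normal)
    (habel : ∀ a ∈ A, ∀ b ∈ A, a * b = b * a) :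
    (∀ u ∈ A, (u : D) ∈ Subring.center D) ∧ ¬ IsCoatom A := by
  have hcentral (u : Dˣ) (hu : u ∈ A) : (u : D) ∈ Subring.center D :=
    hnorm.val_mem_center_of_commute habel hu
  exact ⟨hcentral, Subgroup.not_isCoatom_of_le_center
    (fun u hu => Set.subset_center_units (hcentral u hu)) (Subgroup.center_units_ne_top hD)⟩
end

section
/- Let D be a division ring whose multiplicative group D^* is solvable. Then D is commutative (a field). -/
section Hua

variable {D : Type*} [DivisionRing D]

lemma hua_abelian_normal (N : Subgroup Dˣ) (hN : N.Normal)
    (habel : ∀ x ∈ N, ∀ y ∈ N, x * y = y * x)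
    {a : Dˣ} (ha : a ∈ N) : ∀ d : D, (a : D) * d = d * (a : D) := by
  intro d
  by_contra hab
  have hd0 : d ≠ 0 := by rintro rfl; simp at hab
  set b : Dˣ := Units.mk0 d hd0 with hbdef
  have hBd : (b : D) = d := rfl
  set A : D := (a : D) with hAdef
  have h1B : (1 : D) + b ≠ 0 := by
    intro h
    have hb1 : (b : D) = -1 := (neg_eq_of_add_eq_zero_right h).symm
    apply hab
    rw [← hBd, hb1]; simp
  set u : Dˣ := Units.mk0 ((1 : D) + b) h1B with hudef
  have hU : (u : D) = 1 + (b : D) := rfl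
  have hcmem : b * a * b⁻¹ ∈ N := hN.conj_mem a ha b
  have humem : u * a * u⁻¹ ∈ N := hN.conj_mem a ha u
  set c : Dˣ := b * a * b⁻¹ with hcdef
  set e : Dˣ := u * a * u⁻¹ with hedef
  have hac : Commute A (c : D) := by
    have h1 := habel a ha c hcmem
    have := congrArg Units.val h1
    push_cast at this
    exact this
  have hae : Commute A (e : D) := by
    have h1 := habel a ha e humem
    have := congrArg Units.val h1
    push_cast at this
    exact this
  have hC : (c : D) * b = (b : D) * A := by
    have : c * b = b * a := by rw [hcdef]; group
    have := congrArg Units.val this; push_cast at this; exact this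
  have hE : (e : D) * (1 + (b : D)) = (1 + (b : D)) * A := by
    have : e * u = u * a := by rw [hedef]; group
    have := congrArg Units.val this; push_cast at this
    rw [hU] at this; exact this
  have key : ((e : D) - c) * b = A - e := by
    have h3 : (e : D) + e * b = A + (b : D) * A := by
      calc (e : D) + e * b = e * (1 + b) := by noncomm_ring
      _ = (1 + (b : D)) * A := hE
      _ = A + (b : D) * A := by noncomm_ring
    have h2 : (e : D) * b = A + (b : D) * A - e := eq_sub_of_add_eq' h3
    rw [sub_mul, hC, h2]; abel
  by_cases hec : (e : D) = c
  · rw [hec, sub_self, zero_mul] at key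
    have hAe : A = (e : D) := by
      have h5 : A = (c : D) := (sub_eq_zero.mp key.symm)
      rw [h5, hec]
    apply hab
    have h6 : A * (1 + (b : D)) = (1 + (b : D)) * A := by
      calc A * (1 + (b : D)) = (e : D) * (1 + b) := by rw [← hAe]
      _ = (1 + (b : D)) * A := hE
    rw [mul_add, add_mul, mul_one, one_mul] at h6
    have := add_left_cancel h6
    rwa [hBd] at this
  · have hne : (e : D) - c ≠ 0 := sub_ne_zero.mpr hec
    have hBeq : (b : D) = ((e : D) - c)⁻¹ * (A - e) := by
      rw [← key, ← mul_assoc, inv_mul_cancel₀ hne, one_mul]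
    have hcomm : Commute A (b : D) := by
      rw [hBeq]
      exact ((hae.sub_right hac).inv_right₀).mul_right ((Commute.refl A).sub_right hae)
    exact hab (by rw [← hBd]; exact hcomm)


lemma hua_core (A B C Z : D) (hA : A ≠ 0) (hB : B ≠ 0) (hC : C ≠ 0) (hC1 : C ≠ 1)
    (hBC : B * C = C * B) (hBZ : B * Z = Z * B) (hCZ : C * Z = Z * C)
    (hCA : C * A = A * C) (hZA : Z * A = A * Z)
    (hABA : A * B = C * (B * A))
    (he1 : 1 + B + C*C*B + C*C*(B*B) = Z + Z*(C*B) + Z*(C*B) + Z*(C*C*(B*B))) :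
    C = -1 ∧ B * B = -1 := by
  have cBC : Commute B C := hBC
  have cBZ : Commute B Z := hBZ
  have cCZ : Commute C Z := hCZ
  have cCA : Commute C A := hCA
  have cZA : Commute Z A := hZA
  by_cases hZ1 : Z = 1
  · exfalso
    subst hZ1
    simp only [one_mul] at he1
    have h10 : B + C*C*B = C*B + C*B := by
      calc B + C*C*B = (1 + B + C*C*B + C*C*(B*B)) - (1 + C*C*(B*B)) := by noncomm_ring
      _ = (1 + C*B + C*B + C*C*(B*B)) - (1 + C*C*(B*B)) := by rw [he1]
      _ = C*B + C*B := by noncomm_ring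
    have h9 : ((1:D) - C) * (((1:D) - C) * B) = 0 := by
      calc ((1:D) - C) * (((1:D) - C) * B) = (B + C*C*B) - (C*B + C*B) := by noncomm_ring
      _ = 0 := by rw [h10, sub_self]
    rcases mul_eq_zero.mp h9 with h | h
    · exact hC1 ((sub_eq_zero.mp h).symm)
    · rcases mul_eq_zero.mp h with h' | h'
      · exact hC1 ((sub_eq_zero.mp h').symm)
      · exact hB h'
  · have hwne : (1:D) - Z ≠ 0 := sub_ne_zero.mpr (fun h => hZ1 h.symm)
    set γ : D := C*C*(1-Z) with hγdef
    have hγ : γ ≠ 0 := mul_ne_zero (mul_ne_zero hC hC) hwne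
    have h2 : C*C*(Z*(B*B)) = Z*(C*C*(B*B)) := by
      calc C*C*(Z*(B*B)) = C*(C*Z)*(B*B) := by noncomm_ring
      _ = C*(Z*C)*(B*B) := by rw [hCZ]
      _ = (C*Z)*(C*(B*B)) := by noncomm_ring
      _ = (Z*C)*(C*(B*B)) := by rw [hCZ]
      _ = Z*(C*C*(B*B)) := by noncomm_ring
    set δ : D := Z*C + Z*C - 1 - C*C with hδdef
    have h20 : γ*(B*B) = (Z-1) + δ*B := by
      calc γ*(B*B)
          = (1 + B + C*C*B + C*C*(B*B)) - (1 + B + C*C*B) - C*C*(Z*(B*B)) := by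
            rw [hγdef]; noncomm_ring
        _ = (Z + Z*(C*B) + Z*(C*B) + Z*(C*C*(B*B))) - (1 + B + C*C*B) - Z*(C*C*(B*B)) := by
            rw [he1, h2]
        _ = (Z-1) + δ*B := by rw [hδdef]; noncomm_ring
    set α : D := γ⁻¹*(Z-1) with hαdef
    set β : D := γ⁻¹*δ with hβdef
    have hB2 : B*B = α + β*B := by
      have h21 : γ⁻¹*(γ*(B*B)) = γ⁻¹*((Z-1) + δ*B) := by rw [h20]
      rw [← mul_assoc, inv_mul_cancel₀ hγ, one_mul] at h21
      rw [h21, hαdef, hβdef]; noncomm_ring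
    -- commutation of the central-ish scalars
    have cγA : Commute γ A := (cCA.mul_left cCA).mul_left ((Commute.one_left A).sub_left cZA)
    have cδA : Commute δ A :=
      (((cZA.mul_left cCA).add_left (cZA.mul_left cCA)).sub_left
        (Commute.one_left A)).sub_left (cCA.mul_left cCA)
    have cαA : Commute α A := (cγA.inv_left₀).mul_left (cZA.sub_left (Commute.one_left A))
    have cβA : Commute β A := (cγA.inv_left₀).mul_left cδA
    have cγB : Commute γ B :=
      (cBC.symm.mul_left cBC.symm).mul_left ((Commute.one_left B).sub_left cBZ.symm)
    have cδB : Commute δ B :=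
      (((cBZ.symm.mul_left cBC.symm).add_left (cBZ.symm.mul_left cBC.symm)).sub_left
        (Commute.one_left B)).sub_left (cBC.symm.mul_left cBC.symm)
    have cαB : Commute α B := (cγB.inv_left₀).mul_left (cBZ.symm.sub_left (Commute.one_left B))
    have cβB : Commute β B := (cγB.inv_left₀).mul_left cδB
    have cγC : Commute γ C :=
      ((Commute.refl C).mul_left (Commute.refl C)).mul_left
        ((Commute.one_left C).sub_left cCZ.symm)
    have cδC : Commute δ C :=
      (((cCZ.symm.mul_left (Commute.refl C)).add_left
        (cCZ.symm.mul_left (Commute.refl C))).sub_left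
        (Commute.one_left C)).sub_left ((Commute.refl C).mul_left (Commute.refl C))
    have cβC : Commute β C := (cγC.inv_left₀).mul_left cδC
    -- conjugation of B² by A
    have hABB : A*(B*B) = (C*C)*((B*B)*A) := by
      calc A*(B*B) = (A*B)*B := by noncomm_ring
      _ = (C*(B*A))*B := by rw [hABA]
      _ = C*(B*(A*B)) := by noncomm_ring
      _ = C*(B*(C*(B*A))) := by rw [hABA]
      _ = C*((B*C)*(B*A)) := by noncomm_ring
      _ = C*((C*B)*(B*A)) := by rw [hBC]
      _ = (C*C)*((B*B)*A) := by noncomm_ring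
    have h40 : A*(B*B) = (α + β*(C*B))*A := by
      calc A*(B*B) = A*α + (A*β)*B := by rw [hB2]; noncomm_ring
      _ = α*A + (β*A)*B := by rw [← cαA.eq, ← cβA.eq]
      _ = α*A + β*(A*B) := by noncomm_ring
      _ = α*A + β*(C*(B*A)) := by rw [hABA]
      _ = (α + β*(C*B))*A := by noncomm_ring
    have h41 : (C*C)*((B*B)*A) = ((C*C)*α + (C*C)*(β*B))*A := by
      rw [hB2]; noncomm_ring
    have h30 : α + β*(C*B) = (C*C)*α + (C*C)*(β*B) :=
      mul_right_cancel₀ hA (h40.symm.trans (hABB.trans h41))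
    have hsw : (C*C)*(β*B) = (β*(C*C))*B := by
      have hcc : (C*C)*β = β*(C*C) := (cβC.symm.mul_left cβC.symm).eq
      calc (C*C)*(β*B) = ((C*C)*β)*B := by noncomm_ring
      _ = (β*(C*C))*B := by rw [hcc]
    have h31 : (β*(C - C*C))*B = (C*C - 1)*α := by
      calc (β*(C - C*C))*B = (α + β*(C*B)) - α - (β*(C*C))*B := by noncomm_ring
      _ = ((C*C)*α + (C*C)*(β*B)) - α - (β*(C*C))*B := by rw [h30]
      _ = ((C*C)*α + (β*(C*C))*B) - α - (β*(C*C))*B := by rw [hsw]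
      _ = (C*C - 1)*α := by noncomm_ring
    by_cases hμ : β*(C - C*C) = 0
    · rcases mul_eq_zero.mp hμ with hβ | hCc
      · -- β = 0 : conclude
        rw [hβ, zero_mul, zero_mul] at h31
        have hαne : α ≠ 0 := by
          rw [hαdef]
          exact mul_ne_zero (inv_ne_zero hγ) (sub_ne_zero.mpr hZ1)
        have hCC : C*C - 1 = 0 := by
          rcases mul_eq_zero.mp h31.symm with h | h
          · exact h
          · exact absurd h hαne
        have hCC1 : C*C = 1 := by rwa [sub_eq_zero] at hCC
        have hfac : (C - 1)*(C + 1) = 0 := by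
          calc (C-1)*(C+1) = C*C - 1 := by noncomm_ring
          _ = 0 := hCC
        have hCneg : C = -1 := by
          rcases mul_eq_zero.mp hfac with h | h
          · exact absurd (sub_eq_zero.mp h) hC1
          · exact eq_neg_of_add_eq_zero_left h
        refine ⟨hCneg, ?_⟩
        have hγ' : γ = 1 - Z := by rw [hγdef, hCC1, one_mul]
        have hα : α = -1 := by
          rw [hαdef, hγ', show (Z - 1 : D) = -(1-Z) by abel, mul_neg,
            inv_mul_cancel₀ hwne]
        rw [hB2, hβ, zero_mul, add_zero, hα]
      · exfalso
        have h60 : C*(1 - C) = 0 := by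
          calc C*(1-C) = C - C*C := by noncomm_ring
          _ = 0 := hCc
        rcases mul_eq_zero.mp h60 with h | h
        · exact hC h
        · exact hC1 (sub_eq_zero.mp h).symm
    · exfalso
      have hBval : B = (β*(C - C*C))⁻¹*((C*C-1)*α) := by
        rw [← h31, ← mul_assoc, inv_mul_cancel₀ hμ, one_mul]
      have cAμ : Commute A (β*(C - C*C)) :=
        cβA.symm.mul_right (cCA.symm.sub_right (cCA.symm.mul_right cCA.symm))
      have cAX : Commute A ((C*C-1)*α) :=
        ((cCA.symm.mul_right cCA.symm).sub_right (Commute.one_right A)).mul_right cαA.symm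
      have cAB : Commute A B := by
        rw [hBval]
        exact (cAμ.inv_right₀).mul_right cAX
      have h50 : B*A = C*(B*A) := cAB.eq.symm.trans hABA
      have h51 : ((1:D) - C)*(B*A) = 0 := by
        calc ((1:D) - C)*(B*A) = B*A - C*(B*A) := by noncomm_ring
        _ = 0 := by rw [← h50, sub_self]
      rcases mul_eq_zero.mp h51 with h | h
      · exact hC1 (sub_eq_zero.mp h).symm
      · exact (mul_ne_zero hB hA) h

lemma hua_key2 (N : Subgroup Dˣ) (hN : N.Normal)
    (hc : ∀ x ∈ N, ∀ y ∈ N, ∀ d : D,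
      ((x*y*x⁻¹*y⁻¹ : Dˣ) : D) * d = d * ((x*y*x⁻¹*y⁻¹ : Dˣ) : D))
    {a b : Dˣ} (ha : a ∈ N) (hb : b ∈ N) (hab : (a:D) * b ≠ (b:D) * a) :
    ((a*b*a⁻¹*b⁻¹ : Dˣ) : D) = -1 ∧ (b:D) * (b:D) = -1 := by
  set A : D := (a : D) with hAdef
  set B : D := (b : D) with hBdef
  set c : Dˣ := a*b*a⁻¹*b⁻¹ with hcdef
  set C : D := (c : D) with hCdef
  have hCc : ∀ d : D, C * d = d * C := hc a ha b hb
  have hCBA : C*(B*A) = A*B := by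
    have h1 : c*(b*a) = a*b := by rw [hcdef]; group
    have h2 := congrArg Units.val h1
    simpa only [Units.val_mul] using h2
  have hABA : A*B = C*(B*A) := hCBA.symm
  have hA : A ≠ 0 := Units.ne_zero a
  have hB : B ≠ 0 := Units.ne_zero b
  have hC0 : C ≠ 0 := Units.ne_zero c
  have hC1 : C ≠ 1 := by
    intro h
    apply hab
    rw [hABA, h, one_mul]
  have h1B : (1 : D) + B ≠ 0 := by
    intro h
    have hb1 : B = -1 := (neg_eq_of_add_eq_zero_right h).symm
    apply hab
    rw [hb1]; simp
  set u : Dˣ := Units.mk0 ((1 : D) + B) h1B with hudef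
  have hU : (u : D) = 1 + B := rfl
  set e : Dˣ := a * (u * a⁻¹ * u⁻¹) with hedef
  have he : e ∈ N := N.mul_mem ha (hN.conj_mem a⁻¹ (N.inv_mem ha) u)
  set E : D := (e : D) with hEdef
  have hEU : E * (1 + B) = A * (1+B) * A⁻¹ := by
    have h1 : e * u = a * u * a⁻¹ := by rw [hedef]; group
    have h2 := congrArg Units.val h1
    simp only [Units.val_mul, Units.val_inv_eq_inv_val] at h2
    rw [← hEdef, ← hAdef, hU] at h2
    exact h2
  have fact1 : A*(1+B) = (1+C*B)*A := by
    calc A*(1+B) = A + A*B := by noncomm_ring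
    _ = A + C*(B*A) := by rw [hABA]
    _ = (1+C*B)*A := by noncomm_ring
  have hE : E*(1+B) = 1 + C*B := by
    calc E*(1+B) = A*(1+B)*A⁻¹ := hEU
    _ = ((1+C*B)*A)*A⁻¹ := by rw [fact1]
    _ = (1+C*B)*(A*A⁻¹) := by rw [mul_assoc]
    _ = 1+C*B := by rw [mul_inv_cancel₀ hA, mul_one]
  set z : Dˣ := a*e*a⁻¹*e⁻¹ with hzdef
  set Z : D := (z : D) with hZdef
  have hZc : ∀ d : D, Z * d = d * Z := hc a ha e he
  have hZEA : Z*(E*A) = A*E := by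
    have h1 : z*(e*a) = a*e := by rw [hzdef]; group
    have h2 := congrArg Units.val h1
    simpa only [Units.val_mul] using h2
  have fact2 : A*(1+C*B) = (1+C*(C*B))*A := by
    calc A*(1+C*B) = A + (A*C)*B := by noncomm_ring
    _ = A + (C*A)*B := by rw [hCc A]
    _ = A + C*(A*B) := by noncomm_ring
    _ = A + C*(C*(B*A)) := by rw [hABA]
    _ = (1+C*(C*B))*A := by noncomm_ring
  have eqR : (1+C*(C*B))*A = (Z*(E*(1+C*B)))*A := by
    calc (1+C*(C*B))*A = A*(1+C*B) := fact2.symm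
    _ = A*(E*(1+B)) := by rw [hE]
    _ = (A*E)*(1+B) := by noncomm_ring
    _ = (Z*(E*A))*(1+B) := by rw [hZEA]
    _ = Z*(E*(A*(1+B))) := by noncomm_ring
    _ = Z*(E*((1+C*B)*A)) := by rw [fact1]
    _ = (Z*(E*(1+C*B)))*A := by noncomm_ring
  have h70 : 1+C*(C*B) = Z*(E*(1+C*B)) := mul_right_cancel₀ hA eqR
  have hBCswap : B*C = C*B := (hCc B).symm
  have hcomPQ : (1+C*B)*(1+B) = (1+B)*(1+C*B) := by
    calc (1+C*B)*(1+B) = 1 + B + C*B + C*(B*B) := by noncomm_ring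
    _ = 1 + C*B + B + (B*C)*B := by rw [hBCswap]; noncomm_ring
    _ = (1+B)*(1+C*B) := by noncomm_ring
  have hmain : (1+C*(C*B))*(1+B) = Z*((1+C*B)*(1+C*B)) := by
    calc (1+C*(C*B))*(1+B) = (Z*(E*(1+C*B)))*(1+B) := by rw [h70]
    _ = Z*(E*((1+C*B)*(1+B))) := by noncomm_ring
    _ = Z*(E*((1+B)*(1+C*B))) := by rw [hcomPQ]
    _ = Z*((E*(1+B))*(1+C*B)) := by noncomm_ring
    _ = Z*((1+C*B)*(1+C*B)) := by rw [hE]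
  have hsw2 : (C*B)*(C*B) = C*C*(B*B) := by
    calc (C*B)*(C*B) = C*(B*C)*B := by noncomm_ring
    _ = C*(C*B)*B := by rw [hBCswap]
    _ = C*C*(B*B) := by noncomm_ring
  have he1 : 1 + B + C*C*B + C*C*(B*B) = Z + Z*(C*B) + Z*(C*B) + Z*(C*C*(B*B)) := by
    calc 1 + B + C*C*B + C*C*(B*B) = (1+C*(C*B))*(1+B) := by noncomm_ring
    _ = Z*((1+C*B)*(1+C*B)) := hmain
    _ = Z + Z*(C*B) + Z*(C*B) + Z*((C*B)*(C*B)) := by noncomm_ring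
    _ = Z + Z*(C*B) + Z*(C*B) + Z*(C*C*(B*B)) := by rw [hsw2]
  exact hua_core A B C Z hA hB hC0 hC1 hBCswap (hZc B).symm (hZc C).symm (hCc A) (hZc A) hABA he1


set_option maxHeartbeats 1600000 in
lemma hua_quat (N : Subgroup Dˣ) (hN : N.Normal)
    (hc : ∀ x ∈ N, ∀ y ∈ N, ∀ d : D,
      ((x*y*x⁻¹*y⁻¹ : Dˣ) : D) * d = d * ((x*y*x⁻¹*y⁻¹ : Dˣ) : D))
    {a b : Dˣ} (ha : a ∈ N) (hb : b ∈ N)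
    (hA2 : (a:D)*(a:D) = -1) (hB2 : (b:D)*(b:D) = -1)
    (hanti : (a:D)*(b:D) = -((b:D)*(a:D))) (h2 : (2:D) ≠ 0) : False := by
  set A : D := (a : D) with hAdef
  set B : D := (b : D) with hBdef
  have hA : A ≠ 0 := Units.ne_zero a
  have hB : B ≠ 0 := Units.ne_zero b
  have hABBA : ¬ (A*B = B*A) := by
    intro h
    have h0 : (2:D)*(B*A) = 0 := by
      calc (2:D)*(B*A) = B*A + B*A := two_mul _
      _ = A*B + B*A := by rw [h]
      _ = -(B*A) + B*A := by rw [hanti]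
      _ = 0 := neg_add_cancel _
    rcases mul_eq_zero.mp h0 with h' | h'
    · exact h2 h'
    · exact (mul_ne_zero hB hA) h'
  haveI := ringChar.charP D
  obtain hp | hp := CharP.char_is_prime_or_zero D (ringChar D)
  · -- prime characteristic: quaternion algebra splits, zero divisors
    haveI : Fact (Nat.Prime (ringChar D)) := ⟨hp⟩
    haveI : NeZero (ringChar D) := ⟨hp.pos.ne'⟩
    obtain ⟨x, y, hxy⟩ := ZMod.sq_add_sq (ringChar D) (-1)
    set f := ZMod.castHom (dvd_refl (ringChar D)) D with hfdef
    have hfnat : ∀ v : ZMod (ringChar D), f v = ((v.val : ℕ) : D) := by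
      intro v
      conv_lhs => rw [← ZMod.natCast_rightInverse v]
      rw [map_natCast]
    have hcent : ∀ (v : ZMod (ringChar D)) (d : D), f v * d = d * f v := by
      intro v d
      rw [hfnat v]
      exact (Nat.cast_commute _ _).eq
    set θ : D := f x with hθdef
    set φ : D := f y with hφdef
    have hsum : θ*θ + φ*φ = -1 := by
      have h := congrArg f hxy
      rw [map_add, map_pow, map_pow, map_neg, map_one] at h
      rw [pow_two, pow_two] at h
      exact h
    have hθA : θ*A = A*θ := hcent x A
    have hθB : θ*B = B*θ := hcent x B
    have hφA : φ*A = A*φ := hcent y A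
    have hφB : φ*B = B*φ := hcent y B
    have hφθ : φ*θ = θ*φ := hcent y θ
    set x' : D := θ + φ*A + B with hx'def
    set y' : D := θ - φ*A - B with hy'def
    have e1 : (φ*A)*(φ*A) = -(φ*φ) := by
      calc (φ*A)*(φ*A) = φ*((A*φ)*A) := by noncomm_ring
      _ = φ*((φ*A)*A) := by rw [← hφA]
      _ = (φ*φ)*(A*A) := by noncomm_ring
      _ = (φ*φ)*(-1) := by rw [hA2]
      _ = -(φ*φ) := by noncomm_ring
    have e2 : (φ*A)*B + B*(φ*A) = 0 := by
      calc (φ*A)*B + B*(φ*A) = φ*(A*B) + (B*φ)*A := by noncomm_ring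
      _ = φ*(A*B) + (φ*B)*A := by rw [← hφB]
      _ = φ*(A*B) + φ*(B*A) := by noncomm_ring
      _ = φ*(-(B*A)) + φ*(B*A) := by rw [hanti]
      _ = 0 := by noncomm_ring
    have e3 : (φ*A)*θ = θ*(φ*A) := by
      calc (φ*A)*θ = φ*(A*θ) := by noncomm_ring
      _ = φ*(θ*A) := by rw [← hθA]
      _ = (φ*θ)*A := by noncomm_ring
      _ = (θ*φ)*A := by rw [hφθ]
      _ = θ*(φ*A) := by noncomm_ring
    have hxy0 : x' * y' = 0 := by
      have expand : x' * y' =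
          θ*θ - (φ*A)*(φ*A) - ((φ*A)*B + B*(φ*A)) - B*B + ((φ*A)*θ - θ*(φ*A))
            + (B*θ - θ*B) := by
        rw [hx'def, hy'def]; noncomm_ring
      rw [expand, e1, e2, e3, hθB, hB2]
      have h9 : θ*θ - -(φ*φ) - 0 - -1 + (θ*(φ*A) - θ*(φ*A)) + (B*θ - B*θ)
          = (θ*θ + φ*φ) + 1 := by noncomm_ring
      rw [h9, hsum]
      norm_num
    have hx'0 : x' ≠ 0 := by
      intro h
      have hBeq : B = -(θ + φ*A) := by
        have := neg_eq_of_add_eq_zero_right (a := θ + φ*A) (b := B) (by rw [← hx'def]; exact h)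
        exact this.symm
      apply hABBA
      have cAB : Commute A B := by
        rw [hBeq]
        have cAθ : Commute A θ := hθA.symm
        have cAφ : Commute A φ := hφA.symm
        exact (cAθ.add_right (cAφ.mul_right (Commute.refl A))).neg_right
      exact cAB.eq
    have hy'0 : y' ≠ 0 := by
      intro h
      have hBeq : θ - φ*A = B := sub_eq_zero.mp (by rw [← hy'def]; exact h)
      apply hABBA
      have cAB : Commute A B := by
        rw [← hBeq]
        have cAθ : Commute A θ := hθA.symm
        have cAφ : Commute A φ := hφA.symm
        exact cAθ.sub_right (cAφ.mul_right (Commute.refl A))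
      exact cAB.eq
    exact (mul_ne_zero hx'0 hy'0) hxy0
  · -- characteristic zero
    haveI : CharP D 0 := by rwa [hp] at this
    haveI : CharZero D := CharP.charP_to_charZero D
    have h12A : (1:D) + 2*A ≠ 0 := by
      intro h
      have h2A : 2*A = -1 := (neg_eq_of_add_eq_zero_right h).symm
      apply hABBA
      have hAB2 : (2:D)*(A*B) = (2:D)*(B*A) := by
        calc (2:D)*(A*B) = (2*A)*B := by noncomm_ring
        _ = (-1)*B := by rw [h2A]
        _ = B*(-1) := by noncomm_ring
        _ = B*(2*A) := by rw [h2A]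
        _ = (2:D)*(B*A) := by noncomm_ring
      exact mul_left_cancel₀ h2 hAB2
    set u : Dˣ := Units.mk0 ((1:D) + 2*A) h12A with hudef
    have hU : (u : D) = 1 + 2*A := rfl
    set m : Dˣ := u * b * u⁻¹ with hmdef
    have hm : m ∈ N := hN.conj_mem b hb u
    set M : D := (m : D) with hMdef
    have hMu : M * (1 + 2*A) = (1 + 2*A) * B := by
      have h1 : m * u = u * b := by rw [hmdef]; group
      have h2' := congrArg Units.val h1
      simpa only [Units.val_mul, hU, ← hMdef, ← hBdef] using h2'
    have h80 : (1 + 2*A)*B = B*(1 - 2*A) := by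
      calc (1 + 2*A)*B = B + 2*(A*B) := by noncomm_ring
      _ = B + 2*(-(B*A)) := by rw [hanti]
      _ = B*(1 - 2*A) := by noncomm_ring
    have h81 : ((1:D) + 2*A)*(1 - 2*A) = 5 := by
      have h' : ((1:D) + 2*A)*(1 - 2*A) = 1 - 4*(A*A) := by noncomm_ring
      rw [h', hA2]; norm_num
    have h82 : ((1:D) - 2*A)*(1 - 2*A) = -3 - 4*A := by
      calc ((1:D) - 2*A)*(1 - 2*A) = 1 + 4*(A*A) - 4*A := by noncomm_ring
      _ = 1 + 4*(-1) - 4*A := by rw [hA2]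
      _ = -3 - 4*A := by rw [show (1:D) + 4*(-1) = -3 by norm_num]
    have h5c : ∀ d : D, (5:D)*d = d*(5:D) := by
      intro d
      have := (Nat.cast_commute (5:ℕ) d).eq
      push_cast at this
      exact this
    have h83 : (5:D)*M = B*(-3 - 4*A) := by
      calc (5:D)*M = M*(5:D) := h5c M
      _ = M*(((1:D) + 2*A)*(1 - 2*A)) := by rw [h81]
      _ = (M*(1 + 2*A))*(1 - 2*A) := by noncomm_ring
      _ = ((1 + 2*A)*B)*(1 - 2*A) := by rw [hMu]
      _ = (B*(1 - 2*A))*(1 - 2*A) := by rw [h80]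
      _ = B*((1 - 2*A)*(1 - 2*A)) := by noncomm_ring
      _ = B*(-3 - 4*A) := by rw [h82]
    have h84 : (5:D)*(M*B) = 3 - 4*A := by
      calc (5:D)*(M*B) = ((5:D)*M)*B := by noncomm_ring
      _ = (B*(-3 - 4*A))*B := by rw [h83]
      _ = B*(-3*B - 4*(A*B)) := by noncomm_ring
      _ = B*(-3*B - 4*(-(B*A))) := by rw [hanti]
      _ = -3*(B*B) + 4*((B*B)*A) := by noncomm_ring
      _ = -3*(-1:D) + 4*((-1:D)*A) := by rw [hB2]
      _ = 3 - 4*A := by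
          rw [show (-3:D)*(-1) = 3 by norm_num, neg_one_mul, mul_neg, ← sub_eq_add_neg]
    have h85 : (5:D)*(B*M) = 3 + 4*A := by
      calc (5:D)*(B*M) = B*((5:D)*M) := by noncomm_ring
      _ = B*(B*(-3 - 4*A)) := by rw [h83]
      _ = (B*B)*(-3 - 4*A) := by noncomm_ring
      _ = (-1:D)*(-3 - 4*A) := by rw [hB2]
      _ = 3 + 4*A := by rw [neg_one_mul, neg_sub, sub_neg_eq_add, add_comm]
    set z3 : Dˣ := b*m*b⁻¹*m⁻¹ with hz3def
    set Z3 : D := (z3 : D) with hZ3def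
    have hZ3c : ∀ d : D, Z3 * d = d * Z3 := hc b hb m hm
    have hrel : Z3*(M*B) = B*M := by
      have h1 : z3*(m*b) = b*m := by rw [hz3def]; group
      have h2' := congrArg Units.val h1
      simpa only [Units.val_mul, ← hZ3def, ← hMdef, ← hBdef] using h2'
    have h86 : Z3*(3 - 4*A) = 3 + 4*A := by
      calc Z3*(3 - 4*A) = Z3*((5:D)*(M*B)) := by rw [h84]
      _ = (Z3*(5:D))*(M*B) := by noncomm_ring
      _ = ((5:D)*Z3)*(M*B) := by rw [hZ3c (5:D)]
      _ = (5:D)*(Z3*(M*B)) := by noncomm_ring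
      _ = (5:D)*(B*M) := by rw [hrel]
      _ = 3 + 4*A := h85
    clear_value Z3 z3 M m u A B
    have h88 : 3*Z3 - 4*(Z3*A) = 3 + 4*A := by
      calc 3*Z3 - 4*(Z3*A) = Z3*(3 - 4*A) := by noncomm_ring
      _ = 3 + 4*A := h86
    by_cases hz3' : Z3 = -1
    · rw [hz3'] at h88
      have h' : (-3:D) + 4*A = 3 + 4*A := by
        rw [← h88, show (3:D)*(-1) = -3 by norm_num, neg_one_mul, mul_neg,
          sub_neg_eq_add]
      have h'' : (-3:D) = 3 := add_right_cancel h'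
      have h6 : (0:D) = 6 := by
        calc (0:D) = -3 + 3 := by norm_num
        _ = 3 + 3 := by rw [h'']
        _ = 6 := by norm_num
      exact absurd h6.symm (by norm_num)
    · have h88' : 3*Z3 - 4*(Z3*A) - (3 + 4*A) = 0 := sub_eq_zero.mpr h88
      have h89 : (4*(Z3+1))*A - (3*Z3 - 3) = -(3*Z3 - 4*(Z3*A) - (3 + 4*A)) := by
        noncomm_ring
      rw [h88', neg_zero] at h89
      have h89' : (4*(Z3+1))*A = 3*Z3 - 3 := sub_eq_zero.mp h89
      have hne4 : (4:D)*(Z3+1) ≠ 0 := by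
        refine mul_ne_zero (by norm_num) (fun h => hz3' ?_)
        exact eq_neg_of_add_eq_zero_left h
      have hsw4 : (4*(Z3+1))*B = B*(4*(Z3+1)) := by
        calc (4*(Z3+1))*B = 4*(Z3*B) + 4*B := by noncomm_ring
        _ = 4*(B*Z3) + 4*B := by rw [hZ3c B]
        _ = B*(4*(Z3+1)) := by noncomm_ring
      have hsw3 : (3*Z3 - 3)*B = B*(3*Z3 - 3) := by
        calc (3*Z3 - 3)*B = 3*(Z3*B) - 3*B := by noncomm_ring
        _ = 3*(B*Z3) - 3*B := by rw [hZ3c B]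
        _ = B*(3*Z3 - 3) := by noncomm_ring
      apply hABBA
      have hfinal : (4*(Z3+1))*(A*B) = (4*(Z3+1))*(B*A) := by
        calc (4*(Z3+1))*(A*B) = ((4*(Z3+1))*A)*B := by noncomm_ring
        _ = (3*Z3 - 3)*B := by rw [h89']
        _ = B*(3*Z3 - 3) := hsw3
        _ = B*((4*(Z3+1))*A) := by rw [h89']
        _ = (B*(4*(Z3+1)))*A := by noncomm_ring
        _ = ((4*(Z3+1))*B)*A := by rw [← hsw4]
        _ = (4*(Z3+1))*(B*A) := by noncomm_ring
      exact mul_left_cancel₀ hne4 hfinal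


lemma hua_main (N : Subgroup Dˣ) (hN : N.Normal)
    (hc : ∀ x ∈ N, ∀ y ∈ N, ∀ d : D,
      ((x*y*x⁻¹*y⁻¹ : Dˣ) : D) * d = d * ((x*y*x⁻¹*y⁻¹ : Dˣ) : D)) :
    ∀ x ∈ N, ∀ d : D, (x : D) * d = d * (x : D) := by
  by_cases hcomm : ∀ x ∈ N, ∀ y ∈ N, x * y = y * x
  · intro x hx
    exact hua_abelian_normal N hN hcomm hx
  · exfalso
    push_neg at hcomm
    obtain ⟨a, ha, b, hb, hab⟩ := hcomm
    have hab' : (a:D)*(b:D) ≠ (b:D)*(a:D) := fun h => hab (Units.ext h)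
    obtain ⟨hC, hB2⟩ := hua_key2 N hN hc ha hb hab'
    have hba' : (b:D)*(a:D) ≠ (a:D)*(b:D) := fun h => hab' h.symm
    obtain ⟨hC', hA2⟩ := hua_key2 N hN hc hb ha hba'
    have hrel : ((a*b*a⁻¹*b⁻¹ : Dˣ) : D) * ((b:D)*(a:D)) = (a:D)*(b:D) := by
      have h1 : (a*b*a⁻¹*b⁻¹)*(b*a) = a*b := by group
      have h2 := congrArg Units.val h1
      simpa only [Units.val_mul] using h2
    have hanti : (a:D)*(b:D) = -((b:D)*(a:D)) := by
      rw [← hrel, hC, neg_one_mul]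
    have h2 : (2:D) ≠ 0 := by
      intro h
      have h11 : (1:D) + 1 = 0 := by rw [one_add_one_eq_two]; exact h
      have hm1 : (-1:D) = 1 := neg_eq_of_add_eq_zero_right h11
      apply hab'
      rw [hanti, ← neg_one_mul, hm1, one_mul]
    exact hua_quat N hN hc ha hb hA2 hB2 hanti h2

end Hua

/-- Hua: A division ring whose multiplicative group is solvable is
commutative. -/
theorem stmt_14 {D : Type*} [DivisionRing D] (h : IsSolvable Dˣ) :
    ∀ a b : D, a * b = b * a := by
  obtain ⟨n, hn⟩ := h.solvable
  have key : ∀ k i : ℕ, derivedSeries Dˣ (i + k) = ⊥ →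
      ∀ x ∈ derivedSeries Dˣ i, ∀ d : D, (x:D)*d = d*(x:D) := by
    intro k
    induction k with
    | zero =>
      intro i hi x hx d
      rw [Nat.add_zero] at hi
      rw [hi] at hx
      have hx1 : x = 1 := Subgroup.mem_bot.mp hx
      subst hx1
      simp
    | succ k ih =>
      intro i hi x hx
      have hcen := ih (i+1) (by
        have he : (i+1) + k = i + (k+1) := by omega
        rw [he]; exact hi)
      refine hua_main (derivedSeries Dˣ i) (derivedSeries_normal _ _) ?_ x hx
      intro p hp q hq d
      have hmem : p*q*p⁻¹*q⁻¹ ∈ derivedSeries Dˣ (i+1) := by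
        have hcc := Subgroup.commutator_mem_commutator hp hq
        rw [commutatorElement_def] at hcc
        rwa [derivedSeries_succ]
      exact hcen _ hmem d
  have hall : ∀ x : Dˣ, ∀ d : D, (x:D)*d = d*(x:D) := by
    intro x d
    refine key n 0 (by simpa using hn) x ?_ d
    rw [derivedSeries_zero]
    exact Subgroup.mem_top x
  intro a b
  rcases eq_or_ne a 0 with rfl | ha
  · simp
  · exact hall (Units.mk0 a ha) b
end

section
/- Let D be a noncommutative division ring and A an abelian maximal subgroup of D^*. Then the derived subgroup [D^*, D^*] is not contained in A. -/
/-!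
Since `[Dˣ, Dˣ] ≤ A`, the subgroup `A` is normal, so the centralizer of `A` in `D` is a division
subring stable under conjugation. By the Cartan–Brauer–Hua theorem it is either `D` or central;
as `A` is abelian, `A` lies in its own centralizer, so in both cases `A` is central. A central
coatom forces the whole group to be abelian: any `g ∉ A` has a centralizer strictly above `A`.
Hence all units of `D` commute, and `D` is commutative.
-/

namespace Subring

variable {D : Type*} [DivisionRing D] {K : Subring D}

theorem commute_of_mem_of_notMem (hinv : ∀ x ∈ K, x⁻¹ ∈ K)
    (hconj : ∀ x : D, x ≠ 0 → ∀ k ∈ K, x * k * x⁻¹ ∈ K) {k y : D} (hk : k ∈ K)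
    (hy : y ∉ K) : Commute k y := by
  have hy₀ : y ≠ 0 := by rintro rfl; exact hy K.zero_mem
  have hy₁ : 1 + y ≠ 0 := fun h => hy <| by
    rw [eq_neg_of_add_eq_zero_right h]; exact K.neg_mem K.one_mem
  set k₁ := y * k * y⁻¹
  set k₂ := (1 + y) * k * (1 + y)⁻¹
  have hk₁ : k₁ ∈ K := hconj y hy₀ k hk
  have hk₂ : k₂ ∈ K := hconj (1 + y) hy₁ k hk
  have e₁ : y * k = k₁ * y := by simp [k₁, hy₀]
  have e₂ : (1 + y) * k = k₂ * (1 + y) := by simp [k₂, hy₁]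
  -- Comparing the two conjugates expresses `y` through elements of `K` unless `k₁ = k₂`.
  have key : k - k₂ = (k₂ - k₁) * y := by
    rw [add_mul, one_mul, mul_add, mul_one, e₁] at e₂
    rw [sub_mul, sub_eq_sub_iff_add_eq_add, e₂, add_comm]
  have hk₁₂ : k₂ = k₁ := by
    by_contra hne
    have hy' : y = (k₂ - k₁)⁻¹ * (k - k₂) := by
      rw [key, ← mul_assoc, inv_mul_cancel₀ (sub_ne_zero_of_ne hne), one_mul]
    exact hy (hy' ▸ K.mul_mem (hinv _ (K.sub_mem hk₂ hk₁)) (K.sub_mem hk hk₂))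
  rw [hk₁₂, sub_self, zero_mul, sub_eq_zero] at key
  rw [Commute, SemiconjBy, e₁, ← key]

/-- The Cartan–Brauer–Hua theorem. -/
theorem eq_top_or_le_center_of_conj_mem (hinv : ∀ x ∈ K, x⁻¹ ∈ K)
    (hconj : ∀ x : D, x ≠ 0 → ∀ k ∈ K, x * k * x⁻¹ ∈ K) :
    K = ⊤ ∨ K ≤ center D := by
  refine or_iff_not_imp_left.mpr fun hK k hk => mem_center_iff.mpr fun y => ?_
  obtain ⟨w, hw⟩ : ∃ w, w ∉ K := by
    by_contra! h
    exact hK (eq_top_iff.mpr fun x _ => h x)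
  by_cases hy : y ∈ K
  · have hwy : w + y ∉ K := fun h => hw (by simpa using K.sub_mem h hy)
    have h := (commute_of_mem_of_notMem hinv hconj hk hwy).eq
    rw [mul_add, add_mul, (commute_of_mem_of_notMem hinv hconj hk hw).eq] at h
    exact (add_left_cancel h).symm
  · exact (commute_of_mem_of_notMem hinv hconj hk hy).eq.symm

end Subring

theorem Set.conj_mem_centralizer {D : Type*} [DivisionRing D] {s : Set D}
    (hs : ∀ x : D, x ≠ 0 → ∀ a ∈ s, x⁻¹ * a * x ∈ s) {x k : D} (hx : x ≠ 0)
    (hk : k ∈ s.centralizer) : x * k * x⁻¹ ∈ s.centralizer := by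
  intro a ha
  have h := hk _ (hs x hx a ha)
  calc a * (x * k * x⁻¹) = x * (x⁻¹ * a * x * k) * x⁻¹ := by simp [mul_assoc, hx]
    _ = x * (k * (x⁻¹ * a * x)) * x⁻¹ := by rw [h]
    _ = x * k * x⁻¹ * a := by simp [mul_assoc, hx]

theorem Subgroup.Normal.le_center_units_of_commute {D : Type*} [DivisionRing D]
    {A : Subgroup Dˣ} (hA : A.Normal) (habel : ∀ a ∈ A, ∀ b ∈ A, a * b = b * a) :
    A ≤ Subgroup.center Dˣ := by
  set s : Set D := (↑) '' (A : Set Dˣ)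
  have hs : ∀ x : D, x ≠ 0 → ∀ a ∈ s, x⁻¹ * a * x ∈ s := by
    rintro x hx _ ⟨a, ha, rfl⟩
    refine ⟨(Units.mk0 x hx)⁻¹ * a * (Units.mk0 x hx)⁻¹⁻¹, hA.conj_mem _ ha _, ?_⟩
    simp
  have hsC : s ⊆ Subring.centralizer s := by
    rintro _ ⟨a, ha, rfl⟩ _ ⟨b, hb, rfl⟩
    exact congrArg Units.val (habel b hb a ha)
  have hsZ : s ⊆ Set.center D := by
    rcases Subring.eq_top_or_le_center_of_conj_mem (K := Subring.centralizer s)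
      (fun _ => Set.inv_mem_centralizer₀) (fun _ hx _ => Set.conj_mem_centralizer hs hx)
      with h | h
    · exact Subring.centralizer_eq_top_iff_subset.mp h
    · exact hsC.trans h
  exact fun a ha => Set.subset_center_units (hsZ ⟨a, ha, rfl⟩)

theorem Subgroup.center_eq_top_of_isCoatom_le_center {G : Type*} [Group G] {A : Subgroup G}
    (hA : IsCoatom A) (hAZ : A ≤ center G) : center G = ⊤ := by
  refine eq_top_iff.mpr fun g _ => ?_
  by_cases hg : g ∈ A
  · exact hAZ hg
  have hAg : A ≤ centralizer {g} := fun a ha =>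
    mem_centralizer_singleton_iff.mpr (mem_center_iff.mp (hAZ ha) g).symm
  rcases hA.le_iff.mp hAg with htop | heq
  · exact centralizer_eq_top_iff_subset.mp htop rfl
  · exact absurd (heq ▸ mem_centralizer_singleton_iff.mpr rfl) hg

theorem mul_comm_of_center_units_eq_top {G₀ : Type*} [GroupWithZero G₀]
    (h : Subgroup.center G₀ˣ = ⊤) (a b : G₀) : a * b = b * a := by
  rcases eq_or_ne a 0 with rfl | ha
  · simp
  have ha' : Units.mk0 a ha ∈ Subgroup.center G₀ˣ := h ▸ Subgroup.mem_top _
  exact ((Set.center_units_subset ha').comm b).eq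

/-- If `A` is an abelian maximal subgroup of `Dˣ` for a noncommutative
division ring `D`, then the derived subgroup of `Dˣ` is not contained in `A`. -/
theorem stmt_15 {D : Type*} [DivisionRing D]
    (hD : ∃ a b : D, a * b ≠ b * a)
    (A : Subgroup Dˣ) (hmax : IsCoatom A)
    (habel : ∀ a ∈ A, ∀ b ∈ A, a * b = b * a) :
    ¬ commutator Dˣ ≤ A := by
  intro hle
  have hAZ := (Subgroup.Normal.of_commutator_le (G := Dˣ) hle).le_center_units_of_commute habel
  have hZ := Subgroup.center_eq_top_of_isCoatom_le_center hmax hAZ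
  obtain ⟨a, b, hab⟩ := hD
  exact hab (mul_comm_of_center_units_eq_top hZ a b)
end
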